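/- arXiv:1903.07472 — 7 statements merged into one kernel-verified Lean document; each statement's English description precedes it below -/
import Mathlib

section
/- The set of continuous valuations on a topological space X, ordered pointwise on open sets (the stochastic order), is a directed-complete partial order: every directed family of continuous valuations has a supremum, computed pointwise. -/
open Set ENNReal NNReal TopologicalSpace MeasureTheory
open scoped Classical

/-- A continuous valuation on a topological space `X`: a strict, monotone, modular,
Scott-continuous map from the open sets of `X` to `ℝ≥0∞`. -/
structure ContValuation (X : Type*) [TopologicalSpace X] where
  toFun : Opens X → ℝ≥0∞
  strict' : toFun ⊥ = 0
  mono' : ∀ U V : Opens X, U ≤ V → toFun U ≤ toFun V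
  modular' : ∀ U V : Opens X, toFun U + toFun V = toFun (U ⊔ V) + toFun (U ⊓ V)
  scott' : ∀ S : Set (Opens X), S.Nonempty → DirectedOn (· ≤ ·) S →
    toFun (sSup S) = ⨆ U ∈ S, toFun U

/-- The stochastic order on continuous valuations: pointwise order on open sets. -/
def stochLE {X : Type*} [TopologicalSpace X] (μ ν : ContValuation X) : Prop :=
  ∀ U : Opens X, μ.toFun U ≤ ν.toFun U
/-- The set of continuous valuations on a topological space `X`, ordered by the stochastic
order, is directed complete: every nonempty directed family of continuous valuations has a
least upper bound, computed pointwise on open sets. -/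
theorem contValuation_directedComplete {X : Type*} [TopologicalSpace X]
    (S : Set (ContValuation X)) (hne : S.Nonempty) (hdir : DirectedOn stochLE S) :
    ∃ σ : ContValuation X,
      (∀ U : Opens X, σ.toFun U = ⨆ μ ∈ S, μ.toFun U) ∧
      (∀ μ ∈ S, stochLE μ σ) ∧
      (∀ τ : ContValuation X, (∀ μ ∈ S, stochLE μ τ) → stochLE σ τ) := by
  haveI : Nonempty S := hne.to_subtype
  have key : ∀ U V : Opens X,
      (⨆ μ : S, (μ : ContValuation X).toFun U) + (⨆ μ : S, (μ : ContValuation X).toFun V)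
        = ⨆ μ : S, ((μ : ContValuation X).toFun U + (μ : ContValuation X).toFun V) := by
    intro U V
    refine ENNReal.iSup_add_iSup fun i j => ?_
    obtain ⟨k, hkS, hik, hjk⟩ := hdir i i.2 j j.2
    exact ⟨⟨k, hkS⟩, add_le_add (hik U) (hjk V)⟩
  refine ⟨⟨fun U => ⨆ μ ∈ S, μ.toFun U, ?_, ?_, ?_, ?_⟩, fun U => rfl,
    fun μ hμ U => le_biSup (fun ν : ContValuation X => ν.toFun U) hμ, fun τ hτ U => iSup₂_le fun μ hμ => hτ μ hμ U⟩
  · simp [ContValuation.strict']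
  · intro U V hUV
    exact iSup₂_mono fun μ _ => μ.mono' U V hUV
  · intro U V
    show (⨆ μ ∈ S, μ.toFun U) + (⨆ μ ∈ S, μ.toFun V)
        = (⨆ μ ∈ S, μ.toFun (U ⊔ V)) + ⨆ μ ∈ S, μ.toFun (U ⊓ V)
    rw [iSup_subtype', iSup_subtype', iSup_subtype', iSup_subtype', key, key]
    exact iSup_congr fun μ => (μ : ContValuation X).modular' U V
  · intro T hTne hTdir
    show (⨆ μ ∈ S, μ.toFun (sSup T)) = ⨆ U ∈ T, ⨆ μ ∈ S, μ.toFun U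
    simp only [iSup_subtype']
    rw [iSup_comm]
    exact iSup_congr fun μ => by
      rw [(μ : ContValuation X).scott' T hTne hTdir, iSup_subtype']
end

section
/- For every continuous valuation μ on X, lower semicontinuous functions h, k : X → [0,∞], and nonnegative reals r, s, the Choquet integral is linear in the integrand: ∫ (r·h + s·k) dμ = r·∫ h dμ + s·∫ k dμ. -/
/-!
Adding `c • 𝟙_U` to a lower semicontinuous `f` changes its superlevel sets to
`{f > t} ∪ (U ∩ {f + c > t})`, while `{f > t} ∩ (U ∩ {f + c > t}) = U ∩ {f > t}`.
Modularity of `μ` therefore relates `∫ (f + c • 𝟙_U) dμ` to `∫ f dμ` and to the integrals of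
`f` and `f + c` against the restriction `V ↦ μ (U ⊓ V)`. The constant `c` only shifts the
integrand and contributes `c * μ U`, so `∫ (f + c • 𝟙_U) dμ = ∫ f dμ + c * μ U`.
Every lower semicontinuous function is the directed supremum of the step functions with
rational steps below it, which are finite sums of such indicators, and Scott continuity of
`μ` together with monotone convergence carries additivity through directed suprema.
-/

open Set ENNReal NNReal TopologicalSpace MeasureTheory
open scoped Classical

/-- The Choquet integral `∫ h dμ = ∫₀^∞ μ(h⁻¹(r,∞]) dr` of a lower semicontinuous
function `h : X → ℝ≥0∞` with respect to a continuous valuation `μ`. -/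
noncomputable def choquet {X : Type*} [TopologicalSpace X] (μ : ContValuation X)
    (h : X → ℝ≥0∞) (hh : LowerSemicontinuous h) : ℝ≥0∞ :=
  ∫⁻ r in Set.Ioi (0 : ℝ), μ.toFun ⟨h ⁻¹' Set.Ioi (ENNReal.ofReal r), hh.isOpen_preimage _⟩

theorem setLIntegral_Ioi_comp_sub (φ : ℝ → ℝ≥0∞) (c : ℝ) :
    ∫⁻ t in Ioi c, φ (t - c) = ∫⁻ t in Ioi 0, φ t := by
  rw [← lintegral_indicator measurableSet_Ioi, ← lintegral_indicator measurableSet_Ioi,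
    ← lintegral_sub_right_eq_self ((Ioi 0).indicator φ) c]
  congr 1 with t
  simp only [indicator, mem_Ioi, sub_pos]

theorem LowerSemicontinuous.const_mul {X : Type*} [TopologicalSpace X] {g : X → ℝ≥0∞}
    (hg : LowerSemicontinuous g) (c : ℝ≥0) :
    LowerSemicontinuous fun x => (c : ℝ≥0∞) * g x :=
  (ENNReal.continuous_const_mul coe_ne_top).comp_lowerSemicontinuous hg
    fun _ _ h => mul_le_mul_right h _

namespace ContValuation

variable {X : Type*} [TopologicalSpace X]

theorem toFun_iSup {ι : Sort*} [Nonempty ι] (μ : ContValuation X) {U : ι → Opens X}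
    (hU : Directed (· ≤ ·) U) : μ.toFun (⨆ i, U i) = ⨆ i, μ.toFun (U i) := by
  rw [iSup, μ.scott' _ (range_nonempty U) hU.directedOn_range, iSup_range]

def restrict (μ : ContValuation X) (U : Opens X) : ContValuation X where
  toFun V := μ.toFun (U ⊓ V)
  strict' := by rw [inf_bot_eq, μ.strict']
  mono' _ _ h := μ.mono' _ _ (inf_le_inf_left U h)
  modular' V W := by rw [μ.modular', ← inf_sup_left, ← inf_inf_distrib_left]
  scott' S hS hdir := by
    rw [inf_sSup_eq, ← sSup_image, μ.scott' _ (hS.image _), iSup_image]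
    intro _ ⟨V, hV, hV'⟩ _ ⟨W, hW, hW'⟩
    obtain ⟨Z, hZ, hVZ, hWZ⟩ := hdir V hV W hW
    exact ⟨U ⊓ Z, mem_image_of_mem _ hZ, hV' ▸ inf_le_inf_left U hVZ,
      hW' ▸ inf_le_inf_left U hWZ⟩

theorem restrict_toFun (μ : ContValuation X) (U V : Opens X) :
    (μ.restrict U).toFun V = μ.toFun (U ⊓ V) := rfl

theorem restrict_stochLE (μ : ContValuation X) (U : Opens X) : stochLE (μ.restrict U) μ :=
  fun _ => μ.mono' _ _ inf_le_right

end ContValuation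

section StepBelow

variable {X : Type*}

noncomputable def stepBelow (g : X → ℝ≥0∞) (F : Finset ℚ) (x : X) : ℝ≥0∞ :=
  F.sup fun q => (g ⁻¹' Ioi ((q : ℝ).toNNReal : ℝ≥0∞)).indicator
    (fun _ => ((q : ℝ).toNNReal : ℝ≥0∞)) x

theorem stepBelow_empty (g : X → ℝ≥0∞) : stepBelow g ∅ = fun _ => 0 := rfl

theorem stepBelow_insert_of_forall_lt (g : X → ℝ≥0∞) {a : ℚ} {s : Finset ℚ}
    (ha : ∀ q ∈ s, q < a) :
    stepBelow g (insert a s) = fun x => stepBelow g s x +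
      (g ⁻¹' Ioi ((a : ℝ).toNNReal : ℝ≥0∞)).indicator
        (fun _ => (((a : ℝ).toNNReal - s.sup fun q => (q : ℝ).toNNReal : ℝ≥0) : ℝ≥0∞)) x := by
  ext x
  have hle : ∀ q ∈ s, (q : ℝ).toNNReal ≤ (a : ℝ).toNNReal := fun q hq =>
    Real.toNNReal_le_toNNReal (Rat.cast_le.2 (ha q hq).le)
  rw [stepBelow, Finset.sup_insert]
  by_cases hx : x ∈ g ⁻¹' Ioi ((a : ℝ).toNNReal : ℝ≥0∞)
  · have hs : stepBelow g s x = ((s.sup fun q => (q : ℝ).toNNReal : ℝ≥0) : ℝ≥0∞) := by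
      rw [ENNReal.coe_finset_sup]
      refine Finset.sup_congr rfl fun q hq => indicator_of_mem ?_ _
      exact lt_of_le_of_lt (ENNReal.coe_le_coe.2 (hle q hq)) hx
    rw [← stepBelow, hs, indicator_of_mem hx, indicator_of_mem hx, ← ENNReal.coe_add,
      add_tsub_cancel_of_le (Finset.sup_le hle),
      sup_eq_left.2 (ENNReal.coe_le_coe.2 (Finset.sup_le hle))]
  · rw [← stepBelow, indicator_of_notMem hx, indicator_of_notMem hx, add_zero]
    exact max_eq_right zero_le

theorem monotone_stepBelow (g : X → ℝ≥0∞) : Monotone (stepBelow g) :=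
  fun _ _ hFG _ => Finset.sup_mono hFG

theorem iSup_stepBelow (g : X → ℝ≥0∞) : (fun x => ⨆ F, stepBelow g F x) = g := by
  ext x
  refine le_antisymm (iSup_le fun F => Finset.sup_le fun q _ => ?_)
    (le_of_forall_lt fun b hb => ?_)
  · by_cases hq : x ∈ g ⁻¹' Ioi ((q : ℝ).toNNReal : ℝ≥0∞)
    · rw [indicator_of_mem hq]; exact le_of_lt hq
    · rw [indicator_of_notMem hq]; exact zero_le
  · obtain ⟨q, -, hbq, hqx⟩ := ENNReal.lt_iff_exists_rat_btwn.1 hb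
    refine hbq.trans_le (le_iSup_of_le {q} ?_)
    rw [stepBelow, Finset.sup_singleton, indicator_of_mem (show x ∈ g ⁻¹' Ioi _ from hqx)]

end StepBelow

def LowerSemicontinuous.openSuperlevel {X : Type*} [TopologicalSpace X] {h : X → ℝ≥0∞}
    (hh : LowerSemicontinuous h) (t : ℝ) : Opens X :=
  ⟨h ⁻¹' Ioi (ENNReal.ofReal t), hh.isOpen_preimage _⟩

section Choquet

variable {X : Type*} [TopologicalSpace X] (μ : ContValuation X)

theorem LowerSemicontinuous.mem_openSuperlevel {h : X → ℝ≥0∞} (hh : LowerSemicontinuous h)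
    {t : ℝ} {x : X} : x ∈ hh.openSuperlevel t ↔ ENNReal.ofReal t < h x := Iff.rfl

theorem choquet_eq_lintegral_openSuperlevel {h : X → ℝ≥0∞} (hh : LowerSemicontinuous h) :
    choquet μ h hh = ∫⁻ t in Ioi 0, μ.toFun (hh.openSuperlevel t) := rfl

theorem LowerSemicontinuous.openSuperlevel_mono {h k : X → ℝ≥0∞}
    (hh : LowerSemicontinuous h) (hk : LowerSemicontinuous k) (hle : h ≤ k) (t : ℝ) :
    hh.openSuperlevel t ≤ hk.openSuperlevel t :=
  fun x hx => lt_of_lt_of_le hx (hle x)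

theorem measurable_toFun_openSuperlevel {h : X → ℝ≥0∞} (hh : LowerSemicontinuous h) :
    Measurable fun t => μ.toFun (hh.openSuperlevel t) :=
  Antitone.measurable fun _ _ hst => μ.mono' _ _ fun _ hx =>
    lt_of_le_of_lt (ENNReal.ofReal_le_ofReal hst) hx

theorem choquet_congr {f g : X → ℝ≥0∞} (hf : LowerSemicontinuous f)
    (hg : LowerSemicontinuous g) (hfg : f = g) : choquet μ f hf = choquet μ g hg := by
  subst hfg; rfl

theorem choquet_mono {ν : ContValuation X} (hμν : stochLE μ ν) {f g : X → ℝ≥0∞}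
    (hf : LowerSemicontinuous f) (hg : LowerSemicontinuous g) (hfg : f ≤ g) :
    choquet μ f hf ≤ choquet ν g hg :=
  lintegral_mono fun t => (hμν _).trans (ν.mono' _ _ (hf.openSuperlevel_mono hg hfg t))

theorem choquet_zero : choquet μ (fun _ => 0) lowerSemicontinuous_const = 0 := by
  have hzero : LowerSemicontinuous fun _ : X => (0 : ℝ≥0∞) := lowerSemicontinuous_const
  have : ∀ t, hzero.openSuperlevel t = ⊥ := fun t =>
    Opens.ext (eq_empty_of_forall_notMem fun _ => ENNReal.not_lt_zero)
  simp only [choquet_eq_lintegral_openSuperlevel, this, μ.strict', lintegral_zero]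

theorem choquet_add_const {f : X → ℝ≥0∞} (hf : LowerSemicontinuous f) (c : ℝ≥0) :
    choquet μ (fun x => f x + c) (hf.add lowerSemicontinuous_const) =
      choquet μ f hf + c * μ.toFun ⊤ := by
  have hf' := hf.add (lowerSemicontinuous_const (z := (c : ℝ≥0∞)))
  have below : ∀ t ∈ Ioo 0 (c : ℝ), hf'.openSuperlevel t = ⊤ := fun t ht =>
    Opens.ext <| eq_univ_of_forall fun x =>
      ((ENNReal.ofReal_lt_iff_lt_toReal ht.1.le coe_ne_top).2 ht.2).trans_le le_add_self
  have above : ∀ t ∈ Ioi (c : ℝ), hf'.openSuperlevel t = hf.openSuperlevel (t - c) := by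
    intro t ht
    ext x
    have : ENNReal.ofReal t = ENNReal.ofReal (t - c) + c := by
      rw [← ENNReal.ofReal_coe_nnreal, ← ENNReal.ofReal_add (sub_nonneg.2 (le_of_lt ht))
        c.coe_nonneg, sub_add_cancel]
    simp only [SetLike.mem_coe, LowerSemicontinuous.mem_openSuperlevel, this,
      ENNReal.add_lt_add_iff_right coe_ne_top]
  calc choquet μ (fun x => f x + c) hf'
      = (∫⁻ t in Ioc 0 (c : ℝ), μ.toFun (hf'.openSuperlevel t)) +
          ∫⁻ t in Ioi (c : ℝ), μ.toFun (hf'.openSuperlevel t) :=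
      by rw [choquet_eq_lintegral_openSuperlevel, ← Ioc_union_Ioi_eq_Ioi c.coe_nonneg,
        lintegral_union measurableSet_Ioi (Ioc_disjoint_Ioi le_rfl)]
    _ = (∫⁻ _ in Ioo 0 (c : ℝ), μ.toFun ⊤) +
          ∫⁻ t in Ioi (c : ℝ), μ.toFun (hf.openSuperlevel (t - c)) := by
        rw [setLIntegral_congr Ioo_ae_eq_Ioc.symm, setLIntegral_congr_fun measurableSet_Ioo
          fun t ht => by rw [below t ht], setLIntegral_congr_fun measurableSet_Ioi
          fun t ht => by rw [above t ht]]
    _ = choquet μ f hf + c * μ.toFun ⊤ := by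
        rw [setLIntegral_Ioi_comp_sub (fun t => μ.toFun (hf.openSuperlevel t)),
          setLIntegral_const, Real.volume_Ioo, sub_zero, ENNReal.ofReal_coe_nnreal,
          choquet_eq_lintegral_openSuperlevel]
        ring

theorem toFun_openSuperlevel_add_indicator {f : X → ℝ≥0∞} (hf : LowerSemicontinuous f)
    (U : Opens X) (c : ℝ≥0) (t : ℝ) :
    μ.toFun (hf.openSuperlevel t) +
        (μ.restrict U).toFun
          ((hf.add (lowerSemicontinuous_const (z := (c : ℝ≥0∞)))).openSuperlevel t) =
      μ.toFun ((hf.add (U.isOpen.lowerSemicontinuous_indicator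
          (zero_le : 0 ≤ (c : ℝ≥0∞)))).openSuperlevel t) +
        (μ.restrict U).toFun (hf.openSuperlevel t) := by
  have hfc := hf.add (lowerSemicontinuous_const (z := (c : ℝ≥0∞)))
  have hg := hf.add (U.isOpen.lowerSemicontinuous_indicator (zero_le : 0 ≤ (c : ℝ≥0∞)))
  have hsup : hf.openSuperlevel t ⊔ (U ⊓ hfc.openSuperlevel t) = hg.openSuperlevel t := by
    ext x
    by_cases hx : x ∈ U
    · simpa [hx, LowerSemicontinuous.mem_openSuperlevel] using fun h => h.trans_le le_self_add
    · simp [hx, LowerSemicontinuous.mem_openSuperlevel]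
  have hinf : hf.openSuperlevel t ⊓ (U ⊓ hfc.openSuperlevel t) = U ⊓ hf.openSuperlevel t := by
    rw [inf_left_comm, inf_eq_left.2 (hf.openSuperlevel_mono hfc (fun _ => le_self_add) t)]
  rw [ContValuation.restrict_toFun, ContValuation.restrict_toFun, μ.modular', hsup, hinf]

theorem choquet_add_indicator {f : X → ℝ≥0∞} (hf : LowerSemicontinuous f) (U : Opens X)
    (c : ℝ≥0) :
    choquet μ (fun x => f x + (U : Set X).indicator (fun _ => (c : ℝ≥0∞)) x)
        (hf.add (U.isOpen.lowerSemicontinuous_indicator (zero_le : 0 ≤ (c : ℝ≥0∞)))) =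
      choquet μ f hf + c * μ.toFun U := by
  set hg := hf.add (U.isOpen.lowerSemicontinuous_indicator (zero_le : 0 ≤ (c : ℝ≥0∞)))
  have hfc := hf.add (lowerSemicontinuous_const (z := (c : ℝ≥0∞)))
  have integrated : choquet μ f hf + choquet (μ.restrict U) _ hfc
      = choquet μ _ hg + choquet (μ.restrict U) f hf := by
    simp only [choquet_eq_lintegral_openSuperlevel]
    rw [← lintegral_add_left (measurable_toFun_openSuperlevel μ hf),
      ← lintegral_add_left (measurable_toFun_openSuperlevel μ hg)]
    exact lintegral_congr (toFun_openSuperlevel_add_indicator μ hf U c)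
  rw [choquet_add_const _ hf, ContValuation.restrict_toFun, inf_top_eq, ← add_assoc,
    add_right_comm] at integrated
  have hA : choquet (μ.restrict U) f hf ≤ choquet μ f hf :=
    choquet_mono _ (μ.restrict_stochLE U) hf hf le_rfl
  by_cases hAtop : choquet (μ.restrict U) f hf = ⊤
  · have htop : choquet μ f hf = ⊤ := top_unique (hAtop ▸ hA)
    rw [htop, top_add]
    exact top_unique (htop ▸ choquet_mono μ (fun _ => le_rfl) hf hg fun _ => le_self_add)
  · exact ((ENNReal.add_left_inj hAtop).1 integrated).symm

theorem choquet_iSup {ι : Type*} [Countable ι] [Nonempty ι] {f : ι → X → ℝ≥0∞}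
    (hf : ∀ i, LowerSemicontinuous (f i)) (hdir : Directed (· ≤ ·) f) :
    choquet μ (fun x => ⨆ i, f i x) (lowerSemicontinuous_iSup hf) =
      ⨆ i, choquet μ (f i) (hf i) := by
  have hlevel : ∀ t, (lowerSemicontinuous_iSup hf).openSuperlevel t =
      ⨆ i, (hf i).openSuperlevel t := fun t => by
    ext x
    simp [LowerSemicontinuous.mem_openSuperlevel, lt_iSup_iff]
  have hdir_level : ∀ t, Directed (· ≤ ·) fun i => (hf i).openSuperlevel t := fun t i j => by
    obtain ⟨k, hik, hjk⟩ := hdir i j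
    exact ⟨k, (hf i).openSuperlevel_mono (hf k) hik t, (hf j).openSuperlevel_mono (hf k) hjk t⟩
  simp only [choquet_eq_lintegral_openSuperlevel, hlevel, μ.toFun_iSup (hdir_level _)]
  refine lintegral_iSup_directed
    (fun i => (measurable_toFun_openSuperlevel μ (hf i)).aemeasurable) fun i j => ?_
  obtain ⟨k, hik, hjk⟩ := hdir i j
  exact ⟨k, fun t => μ.mono' _ _ ((hf i).openSuperlevel_mono (hf k) hik t),
    fun t => μ.mono' _ _ ((hf j).openSuperlevel_mono (hf k) hjk t)⟩

def IsChoquetLinear (g : X → ℝ≥0∞) : Prop :=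
  ∃ hg : LowerSemicontinuous g, ∀ (f : X → ℝ≥0∞) (hf : LowerSemicontinuous f) (c : ℝ≥0),
    choquet μ (fun x => f x + c * g x) (hf.add (hg.const_mul c)) =
      choquet μ f hf + c * choquet μ g hg

theorem isChoquetLinear_zero : IsChoquetLinear μ fun _ => 0 :=
  ⟨lowerSemicontinuous_const, fun f hf c => by
    simp only [mul_zero, add_zero, choquet_zero]⟩

theorem IsChoquetLinear.add_indicator {g : X → ℝ≥0∞} (hlin : IsChoquetLinear μ g)
    (U : Opens X) (d : ℝ≥0) :
    IsChoquetLinear μ fun x => g x + (U : Set X).indicator (fun _ => (d : ℝ≥0∞)) x := by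
  obtain ⟨hg, H⟩ := hlin
  refine ⟨hg.add (U.isOpen.lowerSemicontinuous_indicator (zero_le : 0 ≤ (d : ℝ≥0∞))),
    fun f hf c => ?_⟩
  have hsplit : (fun x => f x + c * (g x + (U : Set X).indicator (fun _ => (d : ℝ≥0∞)) x)) =
      fun x => (f x + c * g x) +
        (U : Set X).indicator (fun _ => ((c * d : ℝ≥0) : ℝ≥0∞)) x := by
    ext x
    by_cases hx : x ∈ U <;> simp [hx, mul_add, add_assoc]
  rw [choquet_congr μ _ ((hf.add (hg.const_mul c)).add
      (U.isOpen.lowerSemicontinuous_indicator zero_le)) hsplit,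
    choquet_add_indicator μ (hf.add (hg.const_mul c)), H f hf c, choquet_add_indicator μ hg]
  push_cast
  ring

theorem isChoquetLinear_iSup {ι : Type*} [Countable ι] [Nonempty ι] {g : ι → X → ℝ≥0∞}
    (hlin : ∀ i, IsChoquetLinear μ (g i)) (hdir : Directed (· ≤ ·) g) :
    IsChoquetLinear μ fun x => ⨆ i, g i x := by
  choose hg H using hlin
  refine ⟨lowerSemicontinuous_iSup hg, fun f hf c => ?_⟩
  have hdir' : Directed (· ≤ ·) fun i x => f x + c * g i x :=
    hdir.mono_comp (g := fun φ x => f x + c * φ x) _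
      fun _ _ h x => by dsimp only; gcongr; exact h x
  have hpull : (fun x => f x + c * ⨆ i, g i x) = fun x => ⨆ i, (f x + c * g i x) := by
    simp only [ENNReal.mul_iSup, ENNReal.add_iSup]
  have hlsc : ∀ i, LowerSemicontinuous fun x => f x + c * g i x :=
    fun i => hf.add ((hg i).const_mul c)
  rw [choquet_congr μ _ (lowerSemicontinuous_iSup hlsc) hpull, choquet_iSup μ hlsc hdir',
    choquet_iSup μ hg hdir, ENNReal.mul_iSup, ENNReal.add_iSup]
  exact iSup_congr fun i => H i f hf c

theorem isChoquetLinear_stepBelow {g : X → ℝ≥0∞} (hg : LowerSemicontinuous g) (F : Finset ℚ) :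
    IsChoquetLinear μ (stepBelow g F) := by
  induction F using Finset.induction_on_max with
  | empty => rw [stepBelow_empty]; exact isChoquetLinear_zero μ
  | insert a s ha ih =>
    rw [stepBelow_insert_of_forall_lt g ha]
    exact ih.add_indicator μ ⟨_, hg.isOpen_preimage _⟩ _

theorem isChoquetLinear {g : X → ℝ≥0∞} (hg : LowerSemicontinuous g) : IsChoquetLinear μ g :=
  iSup_stepBelow g ▸ isChoquetLinear_iSup μ (isChoquetLinear_stepBelow μ hg)
    (monotone_stepBelow g).directed_le

theorem choquet_add_const_mul {f g : X → ℝ≥0∞} (hf : LowerSemicontinuous f)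
    (hg : LowerSemicontinuous g) (c : ℝ≥0) :
    choquet μ (fun x => f x + c * g x) (hf.add (hg.const_mul c)) =
      choquet μ f hf + c * choquet μ g hg :=
  (isChoquetLinear μ hg).choose_spec f hf c

theorem choquet_const_mul {g : X → ℝ≥0∞} (hg : LowerSemicontinuous g) (c : ℝ≥0) :
    choquet μ (fun x => c * g x) (hg.const_mul c) = c * choquet μ g hg := by
  simpa only [zero_add, choquet_zero] using
    choquet_add_const_mul μ (f := fun _ => 0) lowerSemicontinuous_const hg c

end Choquet

/-- The Choquet integral is linear in the integrand: for a continuous valuation `μ`, lower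
semicontinuous `h, k : X → [0,∞]` and nonnegative reals `r, s`,
`∫ (r·h + s·k) dμ = r·∫ h dμ + s·∫ k dμ`. -/
theorem choquet_linear_integrand {X : Type*} [TopologicalSpace X]
    (μ : ContValuation X) (h k : X → ℝ≥0∞)
    (hh : LowerSemicontinuous h) (hk : LowerSemicontinuous k) (r s : ℝ≥0)
    (hcomb : LowerSemicontinuous fun x => (r : ℝ≥0∞) * h x + (s : ℝ≥0∞) * k x) :
    choquet μ (fun x => (r : ℝ≥0∞) * h x + (s : ℝ≥0∞) * k x) hcomb =
      (r : ℝ≥0∞) * choquet μ h hh + (s : ℝ≥0∞) * choquet μ k hk := by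
  rw [choquet_add_const_mul μ (hh.const_mul r) hk s, choquet_const_mul μ hh r]
end

section
/- For every continuous valuation μ on X and every directed family (in the pointwise order) of lower semicontinuous functions hₐ : X → [0,∞], one has ∫ (supₐ hₐ) dμ = supₐ ∫ hₐ dμ. -/
/-!
Write `∫ h dμ = ∫₀^∞ S_h(r) dr` with survival function `S_h(r) = μ(h > r)`. Scott continuity of `μ`
turns `S_{sup h_a}` into the directed supremum of the `S_{h_a}`. A survival function is antitone,
so its integral over `(0, ∞)` is the supremum of its right Riemann sums of mesh `δ → 0`: the sum
lies between the integrals over `(δ, ∞)` and over `(0, ∞)`. A directed supremum commutes with each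
such countable sum in `ℝ≥0∞`, and the two suprema commute.
-/

open Set ENNReal NNReal TopologicalSpace MeasureTheory
open scoped Classical

lemma ENNReal.tsum_iSup_of_directed {α ι : Type*} {c : ι → α → ℝ≥0∞} (hc : Directed (· ≤ ·) c) :
    ∑' k, ⨆ a, c a k = ⨆ a, ∑' k, c a k := by
  simp only [ENNReal.tsum_eq_iSup_sum]
  rw [iSup_comm]
  exact iSup_congr fun s => ENNReal.finsetSum_iSup fun a b =>
    (hc a b).imp fun _ ⟨had, hbd⟩ k => ⟨had k, hbd k⟩

lemma mem_Ioc_mul_iff_natCeil_div {K : Type*} [Field K] [LinearOrder K] [IsStrictOrderedRing K]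
    [FloorSemiring K] {δ r : K} (hδ : 0 < δ) (k : ℕ) :
    r ∈ Ioc (k * δ) ((k + 1) * δ) ↔ 0 < r ∧ ⌈r / δ⌉₊ = k + 1 := by
  rw [Nat.ceil_eq_iff k.succ_ne_zero, Nat.succ_sub_one, mem_Ioc, lt_div_iff₀ hδ,
    div_le_iff₀ hδ]
  push_cast
  exact ⟨fun ⟨hlt, hle⟩ => ⟨(by positivity : (0 : K) ≤ k * δ).trans_lt hlt, hlt, hle⟩,
    fun ⟨_, hlt, hle⟩ => ⟨hlt, hle⟩⟩

lemma lintegral_Ioi_comp_natCeil_div (f : ℝ → ℝ≥0∞) {δ : ℝ} (hδ : 0 < δ) :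
    ∫⁻ r in Ioi 0, f (⌈r / δ⌉₊ * δ) = ∑' k : ℕ, f ((k + 1) * δ) * ENNReal.ofReal δ := by
  have hunion : Ioi (0 : ℝ) = ⋃ k : ℕ, Ioc (k * δ) ((k + 1) * δ) := by
    ext r
    simp only [mem_iUnion, mem_Ioc_mul_iff_natCeil_div hδ, mem_Ioi]
    refine ⟨fun hr => ⟨⌈r / δ⌉₊ - 1, hr, ?_⟩, fun ⟨_, hr, _⟩ => hr⟩
    have : 0 < ⌈r / δ⌉₊ := Nat.ceil_pos.mpr (div_pos hr hδ)
    omega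
  have hdisj : Pairwise (Function.onFun Disjoint fun k : ℕ => Ioc (k * δ) ((k + 1) * δ)) := by
    refine fun i j hij => disjoint_left.mpr fun r hi hj => hij ?_
    rw [mem_Ioc_mul_iff_natCeil_div hδ] at hi hj
    omega
  rw [hunion, lintegral_iUnion (fun _ => measurableSet_Ioc) hdisj]
  refine tsum_congr fun k => ?_
  rw [setLIntegral_congr_fun measurableSet_Ioc (g := fun _ => f ((k + 1) * δ)) fun r hr => by
      rw [((mem_Ioc_mul_iff_natCeil_div hδ k).mp hr).2]; push_cast; rfl,
    setLIntegral_const, Real.volume_Ioc]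
  ring_nf

lemma lintegral_Ioi_eq_iSup_lintegral_Ioi_one_div (f : ℝ → ℝ≥0∞) :
    ∫⁻ r in Ioi 0, f r = ⨆ n : ℕ, ∫⁻ r in Ioi (1 / (n + 1 : ℝ)), f r := by
  have hunion : Ioi (0 : ℝ) = ⋃ n : ℕ, Ioi (1 / (n + 1 : ℝ)) := by
    ext r
    simp only [mem_iUnion, mem_Ioi]
    exact ⟨exists_nat_one_div_lt, fun ⟨n, hn⟩ => Nat.one_div_pos_of_nat.trans hn⟩
  rw [hunion, setLIntegral_iUnion_of_directed]
  exact directed_of_isDirected_le fun m n hmn => Ioi_subset_Ioi (Nat.one_div_le_one_div hmn)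

noncomputable def rightRiemannSum (f : ℝ → ℝ≥0∞) (δ : ℝ) : ℝ≥0∞ :=
  ∑' k : ℕ, f ((k + 1) * δ) * ENNReal.ofReal δ

lemma rightRiemannSum_iSup_of_directed {ι : Type*} {f : ι → ℝ → ℝ≥0∞}
    (hf : Directed (· ≤ ·) f) (δ : ℝ) :
    rightRiemannSum (⨆ a, f a) δ = ⨆ a, rightRiemannSum (f a) δ := by
  simp only [rightRiemannSum, iSup_apply, ENNReal.iSup_mul]
  exact ENNReal.tsum_iSup_of_directed fun a b => (hf a b).imp fun _ ⟨hac, hbc⟩ =>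
    ⟨fun _ => mul_le_mul_left (hac _) _, fun _ => mul_le_mul_left (hbc _) _⟩

namespace Antitone

variable {f : ℝ → ℝ≥0∞} {δ : ℝ}

lemma rightRiemannSum_le_lintegral (hf : Antitone f) (hδ : 0 < δ) :
    rightRiemannSum f δ ≤ ∫⁻ r in Ioi 0, f r := by
  rw [rightRiemannSum, ← lintegral_Ioi_comp_natCeil_div f hδ]
  exact setLIntegral_mono' measurableSet_Ioi fun r _ => hf ((div_le_iff₀ hδ).mp (Nat.le_ceil _))

lemma setLIntegral_Ioi_le_rightRiemannSum (hf : Antitone f) (hδ : 0 < δ) :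
    ∫⁻ r in Ioi δ, f r ≤ rightRiemannSum f δ := by
  have hshift : ∫⁻ r in Ioi 0, f (r + δ) = ∫⁻ r in Ioi δ, f r := by
    have := (measurePreserving_add_right volume δ).setLIntegral_comp_preimage_emb
      (measurableEmbedding_addRight δ) f (Ioi δ)
    rwa [show (· + δ) ⁻¹' Ioi δ = Ioi 0 by ext; simp] at this
  rw [← hshift, rightRiemannSum, ← lintegral_Ioi_comp_natCeil_div f hδ]
  refine setLIntegral_mono' measurableSet_Ioi fun r (hr : 0 < r) => hf ?_
  rw [← le_div_iff₀ hδ, add_div, div_self hδ.ne']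
  exact (Nat.ceil_lt_add_one (div_pos hr hδ).le).le

lemma lintegral_Ioi_eq_iSup_rightRiemannSum (hf : Antitone f) :
    ∫⁻ r in Ioi 0, f r = ⨆ n : ℕ, rightRiemannSum f (1 / (n + 1)) :=
  le_antisymm
    ((lintegral_Ioi_eq_iSup_lintegral_Ioi_one_div f).trans_le <|
      iSup_mono fun _ => hf.setLIntegral_Ioi_le_rightRiemannSum Nat.one_div_pos_of_nat)
    (iSup_le fun _ => hf.rightRiemannSum_le_lintegral Nat.one_div_pos_of_nat)

end Antitone

def LowerSemicontinuous.superlevel {X : Type*} [TopologicalSpace X] {h : X → ℝ≥0∞}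
    (hh : LowerSemicontinuous h) (t : ℝ≥0∞) : Opens X :=
  ⟨h ⁻¹' Ioi t, hh.isOpen_preimage t⟩

namespace ContValuation

variable {X : Type*} [TopologicalSpace X] (μ : ContValuation X)

lemma toFun_iSup_of_directed {ι : Type*} [Nonempty ι] {U : ι → Opens X}
    (hU : Directed (· ≤ ·) U) : μ.toFun (⨆ i, U i) = ⨆ i, μ.toFun (U i) := by
  rw [iSup, μ.scott' _ (range_nonempty U) hU.directedOn_range, iSup_range]

def survival {h : X → ℝ≥0∞} (hh : LowerSemicontinuous h) (r : ℝ) : ℝ≥0∞ :=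
  μ.toFun (hh.superlevel (ENNReal.ofReal r))

lemma choquet_eq_lintegral_survival {h : X → ℝ≥0∞} (hh : LowerSemicontinuous h) :
    choquet μ h hh = ∫⁻ r in Ioi 0, μ.survival hh r :=
  rfl

lemma survival_mono {h₁ h₂ : X → ℝ≥0∞} (hh₁ : LowerSemicontinuous h₁)
    (hh₂ : LowerSemicontinuous h₂) (h₁₂ : h₁ ≤ h₂) : μ.survival hh₁ ≤ μ.survival hh₂ :=
  fun _ => μ.mono' _ _ fun _ hx => lt_of_lt_of_le hx (h₁₂ _)

lemma antitone_survival {h : X → ℝ≥0∞} (hh : LowerSemicontinuous h) :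
    Antitone (μ.survival hh) :=
  fun _ _ hrs => μ.mono' _ _ fun _ hx => lt_of_le_of_lt (ENNReal.ofReal_le_ofReal hrs) hx

lemma survival_iSup {ι : Type*} [Nonempty ι] {h : ι → X → ℝ≥0∞}
    (hh : ∀ a, LowerSemicontinuous (h a)) (hdir : Directed (· ≤ ·) h)
    (hsup : LowerSemicontinuous fun x => ⨆ a, h a x) :
    μ.survival hsup = ⨆ a, μ.survival (hh a) := by
  ext r
  have hlevel : hsup.superlevel (ENNReal.ofReal r) =
      ⨆ a, (hh a).superlevel (ENNReal.ofReal r) := by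
    ext x
    simp [LowerSemicontinuous.superlevel, lt_iSup_iff]
  rw [iSup_apply, survival, hlevel, μ.toFun_iSup_of_directed]
  · rfl
  exact fun a b => (hdir a b).imp fun _ ⟨hac, hbc⟩ =>
    ⟨fun x hx => lt_of_lt_of_le hx (hac x), fun x hx => lt_of_lt_of_le hx (hbc x)⟩

end ContValuation

/-- The Choquet integral commutes with directed suprema of lower semicontinuous
integrands: `∫ (supₐ hₐ) dμ = supₐ ∫ hₐ dμ` for a directed (in the pointwise order)
family of lower semicontinuous functions `hₐ : X → [0,∞]`. -/
theorem choquet_directed_sup {X : Type*} [TopologicalSpace X] {ι : Type*} [Nonempty ι]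
    (μ : ContValuation X) (h : ι → X → ℝ≥0∞) (hh : ∀ a, LowerSemicontinuous (h a))
    (hdir : Directed (fun g₁ g₂ : X → ℝ≥0∞ => ∀ x, g₁ x ≤ g₂ x) h)
    (hsup : LowerSemicontinuous fun x => ⨆ a, h a x) :
    choquet μ (fun x => ⨆ a, h a x) hsup = ⨆ a, choquet μ (h a) (hh a) := by
  have hdir_survival : Directed (· ≤ ·) fun a => μ.survival (hh a) :=
    hdir.mono_comp _ fun a b hab => μ.survival_mono (hh a) (hh b) hab
  calc choquet μ (fun x => ⨆ a, h a x) hsup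
      = ⨆ n : ℕ, rightRiemannSum (μ.survival hsup) (1 / (n + 1)) :=
        (μ.antitone_survival hsup).lintegral_Ioi_eq_iSup_rightRiemannSum
    _ = ⨆ n : ℕ, ⨆ a, rightRiemannSum (μ.survival (hh a)) (1 / (n + 1)) := by
        simp only [μ.survival_iSup hh hdir hsup, rightRiemannSum_iSup_of_directed hdir_survival]
    _ = ⨆ a, choquet μ (h a) (hh a) := by
        rw [iSup_comm]
        simp only [ContValuation.choquet_eq_lintegral_survival,
          (μ.antitone_survival _).lintegral_Ioi_eq_iSup_rightRiemannSum]
end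

section
/- Every linear retract of a locally linear topological cone is a weakly locally convex topological cone: if C is a locally linear topological cone, D is a topological cone, and r : C → D is a continuous linear map admitting a continuous section s : D → C with r∘s = id, then D is weakly locally convex. -/
open Set ENNReal NNReal TopologicalSpace MeasureTheory
open scoped Classical

/-- The Scott topology on the nonnegative reals: opens are the rays `(r, ∞)`. -/
def scottNNReal : TopologicalSpace ℝ≥0 :=
  .generateFrom {s | ∃ r : ℝ≥0, s = Set.Ioi r}

section ConeDefs
variable (C : Type*) [AddCommMonoid C] [Module ℝ≥0 C] [TopologicalSpace C]

variable {C} in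
/-- A subset `A` of a cone is convex if `t•a + (1−t)•b ∈ A` for all `a, b ∈ A`, `t ∈ [0,1]`. -/
def IsConvexSet (A : Set C) : Prop :=
  ∀ a ∈ A, ∀ b ∈ A, ∀ t : ℝ≥0, t ≤ 1 → t • a + (1 - t) • b ∈ A

variable {C} in
/-- A half-space of a cone: a convex set with convex complement. -/
def IsHalfSpace (A : Set C) : Prop := IsConvexSet A ∧ IsConvexSet Aᶜ

/-- A cone is semitopological when addition and scalar multiplication are separately
continuous (scalars carrying the Scott topology of `ℝ≥0`). -/
def SeparatelyContinuousCone : Prop :=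
  (∀ a : C, Continuous fun b : C => a + b) ∧
  (∀ r : ℝ≥0, Continuous fun x : C => r • x) ∧
  (∀ x : C, @Continuous ℝ≥0 C scottNNReal _ fun r => r • x)

/-- A cone is topological when addition and scalar multiplication are jointly continuous
(scalars carrying the Scott topology of `ℝ≥0`). -/
def JointlyContinuousCone : Prop :=
  Continuous (fun p : C × C => p.1 + p.2) ∧
  @Continuous (ℝ≥0 × C) C (@instTopologicalSpaceProd _ _ scottNNReal _) _
    (fun p => p.1 • p.2)

/-- A cone is locally linear when its topology has a subbase of open half-spaces. -/
def LocallyLinearCone : Prop :=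
  ‹TopologicalSpace C› = .generateFrom {A : Set C | IsOpen A ∧ IsHalfSpace A}

/-- A cone is locally convex when each point has a neighbourhood basis of open convex
sets. -/
def LocallyConvexCone : Prop :=
  ∀ (x : C) (U : Set C), IsOpen U → x ∈ U → ∃ V, IsOpen V ∧ IsConvexSet V ∧ x ∈ V ∧ V ⊆ U

/-- A cone is weakly locally convex when every open neighbourhood of a point contains a
(not necessarily open) convex neighbourhood of that point. -/
def WeaklyLocallyConvexCone : Prop :=
  ∀ (x : C) (U : Set C), IsOpen U → x ∈ U → ∃ V ∈ nhds x, IsConvexSet V ∧ V ⊆ U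

variable {C} in
/-- A linear functional on a cone, valued in `[0,∞]`. -/
def IsLinearFunctional (Λ : C → ℝ≥0∞) : Prop :=
  ∀ (r s : ℝ≥0) (x y : C), Λ (r • x + s • y) = (r : ℝ≥0∞) * Λ x + (s : ℝ≥0∞) * Λ y

/-- A cone is convex-T0 when any two distinct points are separated by a lower
semicontinuous linear functional into `[0,∞]`. -/
def ConvexT0 : Prop :=
  ∀ a b : C, a ≠ b →
    ∃ Λ : C → ℝ≥0∞, LowerSemicontinuous Λ ∧ IsLinearFunctional Λ ∧ Λ a ≠ Λ b

end ConeDefs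

/-- Every linear retract of a locally linear topological cone is weakly locally convex:
if `C` is a locally linear topological cone, `D` is a topological cone, and `r : C → D`
is a continuous linear map admitting a continuous (not necessarily linear) section
`s : D → C` with `r ∘ s = id`, then `D` is weakly locally convex. -/
theorem linearRetract_weaklyLocallyConvex
    (C D : Type*) [AddCommMonoid C] [Module ℝ≥0 C] [TopologicalSpace C] [T0Space C]
    [AddCommMonoid D] [Module ℝ≥0 D] [TopologicalSpace D] [T0Space D]
    (hC : JointlyContinuousCone C) (hD : JointlyContinuousCone D)
    (hCll : LocallyLinearCone C)
    (r : C → D) (hr : Continuous r)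
    (hrlin : ∀ (a b : ℝ≥0) (x y : C), r (a • x + b • y) = a • r x + b • r y)
    (s : D → C) (hs : Continuous s) (hrs : ∀ d, r (s d) = d) :
    WeaklyLocallyConvexCone D := by
  intro x U hU hx
  have hbasis := TopologicalSpace.isTopologicalBasis_of_subbasis hCll
  have hsx : s x ∈ r ⁻¹' U := by simp [hrs, hx]
  obtain ⟨W, hW, hsxW, hWsub⟩ := hbasis.exists_subset_of_mem_open hsx (hU.preimage hr)
  obtain ⟨f, ⟨hfin, hfsub⟩, rfl⟩ := hW
  refine ⟨r '' ⋂₀ f, ?_, ?_, ?_⟩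
  · have hopen : IsOpen (s ⁻¹' ⋂₀ f) :=
      IsOpen.preimage hs (Set.Finite.isOpen_sInter hfin fun A hA => (hfsub hA).1)
    have hsub : s ⁻¹' ⋂₀ f ⊆ r '' ⋂₀ f := fun d hd => ⟨s d, hd, hrs d⟩
    exact Filter.mem_of_superset (hopen.mem_nhds hsxW) hsub
  · rintro a ⟨a', ha', rfl⟩ b ⟨b', hb', rfl⟩ t ht
    refine ⟨t • a' + (1 - t) • b', fun A hA => ?_, hrlin _ _ _ _⟩
    exact (hfsub hA).2.1 a' (ha' A hA) b' (hb' A hA) t ht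
  · rintro d ⟨c, hc, rfl⟩
    exact hWsub hc
end

section
/- Every locally convex semitopological cone is convex-T0: for any two distinct points a, b there exists a lower semicontinuous linear functional Λ : C → [0,∞] with Λ(a) ≠ Λ(b). -/
open Set ENNReal NNReal TopologicalSpace MeasureTheory
open scoped Classical

/-!
By T0 some open set contains one of the two points, say `b`, but not the other, `a`; local
convexity shrinks it to an open convex neighbourhood of `b`. Zorn's lemma enlarges this to a
maximal open convex set `H` avoiding `a`, and maximality makes `Hᶜ` convex too: if `x, y ∉ H`
had a convex combination in `H`, the shadow of `H` seen from `x` would have to reach `a`, which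
puts `x` in the shadow seen from `a`, and that shadow stays inside `H`. Open sets of a
semitopological cone absorb addition, so the gauge `x ↦ sup {r > 0 | r⁻¹ • x ∈ H}` of the open
half-space `H` is additive and homogeneous; it is lower semicontinuous, at most `1` off `H` and
above `1` on `H`.
-/

open Topology

theorem scottNNReal_eq_univ_of_zero_mem {U : Set ℝ≥0} (hU : IsOpen[scottNNReal] U)
    (h0 : (0 : ℝ≥0) ∈ U) : U = univ := by
  have hnhds : @nhds ℝ≥0 scottNNReal 0 = ⊤ := by
    rw [scottNNReal, nhds_generateFrom]
    simp only [iInf_eq_top]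
    rintro _ ⟨h, r, rfl⟩
    exact absurd h (by simp)
  exact Filter.mem_top.1 (hnhds ▸ @IsOpen.mem_nhds _ scottNNReal _ _ hU h0)

theorem continuous_id_scottNNReal :
    Continuous[inferInstance, scottNNReal] (id : ℝ≥0 → ℝ≥0) :=
  continuous_generateFrom_iff.2 fun _ ⟨_, hs⟩ => hs ▸ isOpen_Ioi

theorem exists_nnreal_lt_lt_add_eq {a b : ℝ≥0∞} {m : ℝ≥0} (h : a + b < m) :
    ∃ r s : ℝ≥0, a < r ∧ b < s ∧ r + s = m := by
  lift a to ℝ≥0 using (le_self_add.trans_lt (h.trans ENNReal.coe_lt_top)).ne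
  lift b to ℝ≥0 using (le_add_self.trans_lt (h.trans ENNReal.coe_lt_top)).ne
  norm_cast at h
  obtain ⟨r, har, hrb⟩ := exists_between (lt_tsub_iff_right.2 h)
  have hrm : r ≤ m := (lt_tsub_iff_right.1 hrb).le.trans' le_self_add
  exact ⟨r, m - r, by exact_mod_cast har,
    by exact_mod_cast lt_tsub_iff_left.2 (lt_tsub_iff_right.1 hrb), add_tsub_cancel_of_le hrm⟩

section Cone

variable {C : Type*} [AddCommMonoid C] [Module ℝ≥0 C]

theorem IsConvexSet.add_mem {A : Set C} (hA : IsConvexSet A) {x y : C} (hx : x ∈ A)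
    (hy : y ∈ A) {p q : ℝ≥0} (hpq : p + q = 1) : p • x + q • y ∈ A := by
  obtain rfl : q = 1 - p := by rw [← hpq, add_tsub_cancel_left]
  exact hA x hx y hy p (hpq ▸ le_self_add)

theorem IsConvexSet.sUnion_of_isChain {S : Set (Set C)} (hS : ∀ A ∈ S, IsConvexSet A)
    (hchain : IsChain (· ⊆ ·) S) : IsConvexSet (⋃₀ S) := by
  rintro x ⟨A, hA, hxA⟩ y ⟨B, hB, hyB⟩ t ht
  rcases hchain.total hA hB with hAB | hBA
  · exact ⟨B, hB, hS B hB x (hAB hxA) y hyB t ht⟩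
  · exact ⟨A, hA, hS A hA x hxA y (hBA hyB) t ht⟩

variable [TopologicalSpace C]

namespace SeparatelyContinuousCone

variable (hC : SeparatelyContinuousCone C)
include hC

theorem continuous_smul_add_const (r : ℝ≥0) (p : C) : Continuous fun x : C => r • x + p := by
  simp_rw [add_comm _ p]
  exact (hC.1 p).comp (hC.2.1 r)

theorem add_mem_of_isOpen {U : Set C} (hU : IsOpen U) {x : C} (hx : x ∈ U) (y : C) :
    x + y ∈ U := by
  have hpre : IsOpen[scottNNReal] ((fun t : ℝ≥0 => x + t • y) ⁻¹' U) :=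
    @Continuous.isOpen_preimage ℝ≥0 C scottNNReal _ _
      (@Continuous.comp ℝ≥0 C C scottNNReal _ _ _ _ (hC.1 x) (hC.2.2 y)) U hU
  simpa using (scottNNReal_eq_univ_of_zero_mem hpre (by simpa using hx)).ge (mem_univ 1)

theorem exists_lt_one_smul_mem {U : Set C} (hU : IsOpen U) {x : C} (hx : x ∈ U) :
    ∃ t : ℝ≥0, 0 < t ∧ t < 1 ∧ t • x ∈ U := by
  have hcont : Continuous fun t : ℝ≥0 => t • x :=
    @Continuous.comp ℝ≥0 ℝ≥0 C inferInstance scottNNReal _ _ _ (hC.2.2 x)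
      continuous_id_scottNNReal
  obtain ⟨l, hl1, hlU⟩ := exists_Ioc_subset_of_mem_nhds
    ((hU.preimage hcont).mem_nhds (by simpa using hx)) ⟨0, one_pos⟩
  obtain ⟨t, hlt, ht1⟩ := exists_between hl1
  exact ⟨t, hlt.trans_le' l.2, ht1, hlU ⟨hlt, ht1.le⟩⟩

end SeparatelyContinuousCone

end Cone

section Shadow

variable {C : Type*} [AddCommMonoid C] [Module ℝ≥0 C]

/-- The points `c` whose segment towards `p` meets `H` before reaching `p`: the shadow that `H`
casts from a light source at `p`, together with `H`. -/
def shadow (H : Set C) (p : C) : Set C :=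
  {c | ∃ r r' : ℝ≥0, 0 < r ∧ r + r' = 1 ∧ r • c + r' • p ∈ H}

theorem subset_shadow (H : Set C) (p : C) : H ⊆ shadow H p :=
  fun c hc => ⟨1, 0, one_pos, add_zero 1, by simpa using hc⟩

theorem mem_of_self_mem_shadow {H : Set C} {p : C} (hp : p ∈ shadow H p) : p ∈ H := by
  obtain ⟨r, r', -, hsum, hmem⟩ := hp
  rwa [← add_smul, hsum, one_smul] at hmem

theorem SeparatelyContinuousCone.isOpen_shadow [TopologicalSpace C]
    (hC : SeparatelyContinuousCone C) {H : Set C} (hH : IsOpen H) (p : C) :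
    IsOpen (shadow H p) := by
  refine isOpen_iff_mem_nhds.2 fun c ⟨r, r', hr, hsum, hc⟩ => ?_
  filter_upwards [((hC.continuous_smul_add_const r (r' • p)).isOpen_preimage H hH).mem_nhds hc]
    with d hd
  exact ⟨r, r', hr, hsum, hd⟩

theorem IsConvexSet.shadow {H : Set C} (hH : IsConvexSet H) (p : C) :
    IsConvexSet (shadow H p) := by
  rintro c₁ ⟨r₁, r₁', hr₁, hs₁, hm₁⟩ c₂ ⟨r₂, r₂', hr₂, hs₂, hm₂⟩ t ht
  set t' := 1 - t
  have htt' : t + t' = 1 := add_tsub_cancel_of_le ht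
  set d := t * r₂ + t' * r₁
  have hd : 0 < d := by
    rcases eq_zero_or_pos t with rfl | htpos
    · simpa [d, t'] using hr₁
    · exact (mul_pos htpos hr₂).trans_le le_self_add
  -- combine the two witnesses in `H` with weights `t r₂ / d` and `t' r₁ / d`
  have hcomb : (t * r₂ / d) • (r₁ • c₁ + r₁' • p) + (t' * r₁ / d) • (r₂ • c₂ + r₂' • p)
      = (r₁ * r₂ / d) • (t • c₁ + t' • c₂) + ((t * r₂ * r₁' + t' * r₁ * r₂') / d) • p := by
    have e₁ : t * r₂ / d * r₁ = r₁ * r₂ / d * t := by ring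
    have e₂ : t' * r₁ / d * r₂ = r₁ * r₂ / d * t' := by ring
    have e₃ : t * r₂ / d * r₁' + t' * r₁ / d * r₂' = (t * r₂ * r₁' + t' * r₁ * r₂') / d := by
      rw [div_mul_eq_mul_div, div_mul_eq_mul_div, ← add_div]
    simp only [smul_add, smul_smul]
    rw [e₁, e₂, ← e₃, add_smul]
    abel
  have hweights : r₁ * r₂ / d + (t * r₂ * r₁' + t' * r₁ * r₂') / d = 1 := by
    rw [← add_div, div_eq_one_iff_eq hd.ne']
    apply NNReal.coe_injective
    have h₁ : (r₁ : ℝ) + r₁' = 1 := by exact_mod_cast hs₁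
    have h₂ : (r₂ : ℝ) + r₂' = 1 := by exact_mod_cast hs₂
    have h₃ : (t : ℝ) + t' = 1 := by exact_mod_cast htt'
    push_cast [d]
    linear_combination (t : ℝ) * r₂ * h₁ + (t' : ℝ) * r₁ * h₂ - (r₁ : ℝ) * r₂ * h₃
  refine ⟨_, _, div_pos (mul_pos hr₁ hr₂) hd, hweights, hcomb ▸ hH.add_mem hm₁ hm₂ ?_⟩
  rw [← add_div, div_self hd.ne']

end Shadow

section MaximalConvex

variable {C : Type*} [AddCommMonoid C] [Module ℝ≥0 C] [TopologicalSpace C] {a : C}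

theorem exists_maximal_isOpen_isConvexSet_notMem {V : Set C} (hV : IsOpen V)
    (hVconv : IsConvexSet V) (ha : a ∉ V) :
    ∃ H, V ⊆ H ∧ Maximal (fun K : Set C => IsOpen K ∧ IsConvexSet K ∧ a ∉ K) H := by
  refine zorn_subset_nonempty _ (fun S hS hchain _ => ?_) V ⟨hV, hVconv, ha⟩
  refine ⟨⋃₀ S, ⟨isOpen_sUnion fun K hK => (hS hK).1, ?_, ?_⟩, fun K => subset_sUnion_of_mem⟩
  · exact IsConvexSet.sUnion_of_isChain (fun K hK => (hS hK).2.1) hchain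
  · rintro ⟨K, hK, haK⟩
    exact (hS hK).2.2 haK

theorem SeparatelyContinuousCone.isConvexSet_compl_of_maximal (hC : SeparatelyContinuousCone C)
    {H : Set C} (hH : Maximal (fun K : Set C => IsOpen K ∧ IsConvexSet K ∧ a ∉ K) H) :
    IsConvexSet Hᶜ := by
  obtain ⟨hHopen, hHconv, haH⟩ := hH.1
  have shadow_subset : ∀ p, a ∉ shadow H p → shadow H p ⊆ H := fun p hp =>
    hH.2 ⟨hC.isOpen_shadow hHopen p, hHconv.shadow p, hp⟩ (subset_shadow H p)
  intro x hx y hy t ht hz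
  rcases ht.eq_or_lt with rfl | ht
  · exact hx (by simpa using hz)
  have hyx : y ∈ shadow H x :=
    ⟨1 - t, t, tsub_pos_of_lt ht, tsub_add_cancel_of_le ht.le, by rwa [add_comm]⟩
  obtain ⟨r, r', hr, hsum, haxH⟩ : a ∈ shadow H x :=
    by_contra fun hax => hy (shadow_subset x hax hyx)
  rcases eq_zero_or_pos r' with rfl | hr'
  · obtain rfl : r = 1 := by simpa using hsum
    exact haH (by simpa using haxH)
  have hxa : x ∈ shadow H a := ⟨r', r, hr', by rwa [add_comm], by rwa [add_comm]⟩
  exact hx (shadow_subset a (fun ha => haH (mem_of_self_mem_shadow ha)) hxa)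

end MaximalConvex

section SupGauge

variable {C : Type*} [AddCommMonoid C] [Module ℝ≥0 C]

theorem IsConvexSet.inv_smul_add_mem {A : Set C} (hA : IsConvexSet A) {r s : ℝ≥0}
    (hr : 0 < r) (hs : 0 < s) {x y : C} (hx : r⁻¹ • x ∈ A) (hy : s⁻¹ • y ∈ A) :
    (r + s)⁻¹ • (x + y) ∈ A := by
  have hweight : ∀ t : ℝ≥0, t ≠ 0 → t / (r + s) * t⁻¹ = (r + s)⁻¹ := fun t ht => by
    rw [div_mul_eq_mul_div, mul_inv_cancel₀ ht, one_div]
  have hcomb : (r / (r + s)) • r⁻¹ • x + (s / (r + s)) • s⁻¹ • y = (r + s)⁻¹ • (x + y) := by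
    rw [smul_smul, smul_smul, hweight r hr.ne', hweight s hs.ne', smul_add]
  exact hcomb ▸ hA.add_mem hx hy (by rw [← add_div, div_self (add_pos hr hs).ne'])

noncomputable def supGauge (H : Set C) (x : C) : ℝ≥0∞ :=
  ⨆ (r : ℝ≥0) (_ : 0 < r ∧ r⁻¹ • x ∈ H), (r : ℝ≥0∞)

variable {H : Set C}

theorem le_supGauge {x : C} {r : ℝ≥0} (hr : 0 < r) (hx : r⁻¹ • x ∈ H) :
    (r : ℝ≥0∞) ≤ supGauge H x :=
  le_iSup₂ (f := fun (r : ℝ≥0) (_ : 0 < r ∧ r⁻¹ • x ∈ H) => (r : ℝ≥0∞)) r ⟨hr, hx⟩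

theorem supGauge_le {x : C} {c : ℝ≥0∞}
    (h : ∀ r : ℝ≥0, 0 < r → r⁻¹ • x ∈ H → (r : ℝ≥0∞) ≤ c) : supGauge H x ≤ c :=
  iSup₂_le fun r hr => h r hr.1 hr.2

theorem supGauge_smul_le {c : ℝ≥0} (hc : 0 < c) (x : C) :
    supGauge H (c • x) ≤ c * supGauge H x := by
  refine supGauge_le fun r hr hrx => ?_
  have hx : (r / c)⁻¹ • x ∈ H := by rwa [inv_div, div_eq_inv_mul, ← smul_smul]
  calc (r : ℝ≥0∞) = c * (r / c : ℝ≥0) := by rw [← ENNReal.coe_mul, mul_div_cancel₀ _ hc.ne']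
    _ ≤ c * supGauge H x := mul_le_mul_right (le_supGauge (div_pos hr hc) hx) _

theorem supGauge_smul_of_ne_zero {c : ℝ≥0} (hc : c ≠ 0) (x : C) :
    supGauge H (c • x) = c * supGauge H x := by
  refine le_antisymm (supGauge_smul_le (pos_iff_ne_zero.2 hc) x) ?_
  calc (c : ℝ≥0∞) * supGauge H x = c * supGauge H (c⁻¹ • c • x) := by rw [inv_smul_smul₀ hc]
    _ ≤ c * (c⁻¹ * supGauge H (c • x)) :=
      mul_le_mul_right (supGauge_smul_le (inv_pos.2 (pos_iff_ne_zero.2 hc)) _) _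
    _ = supGauge H (c • x) := by
      rw [← mul_assoc, ← ENNReal.coe_mul, mul_inv_cancel₀ hc, ENNReal.coe_one, one_mul]

theorem supGauge_zero (h0 : (0 : C) ∉ H) : supGauge H 0 = 0 :=
  nonpos_iff_eq_zero.1 <| supGauge_le fun _ _ hr => absurd (by simpa using hr) h0

theorem supGauge_smul (h0 : (0 : C) ∉ H) (c : ℝ≥0) (x : C) :
    supGauge H (c • x) = c * supGauge H x := by
  rcases eq_or_ne c 0 with rfl | hc
  · simp [supGauge_zero h0]
  · exact supGauge_smul_of_ne_zero hc x

theorem supGauge_add_le (hcompl : IsConvexSet Hᶜ) (x y : C) :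
    supGauge H (x + y) ≤ supGauge H x + supGauge H y := by
  refine supGauge_le fun m hm hmxy => le_of_not_gt fun hlt => ?_
  obtain ⟨r, s, hr, hs, rfl⟩ := exists_nnreal_lt_lt_add_eq hlt
  have hr0 : 0 < r := ENNReal.coe_pos.1 (hr.trans_le' bot_le)
  have hs0 : 0 < s := ENNReal.coe_pos.1 (hs.trans_le' bot_le)
  have hrx : r⁻¹ • x ∉ H := fun h => (le_supGauge hr0 h).not_gt hr
  have hsy : s⁻¹ • y ∉ H := fun h => (le_supGauge hs0 h).not_gt hs
  exact hcompl.inv_smul_add_mem hr0 hs0 hrx hsy hmxy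

theorem SeparatelyContinuousCone.lowerSemicontinuous_supGauge [TopologicalSpace C]
    (hC : SeparatelyContinuousCone C) (hH : IsOpen H) : LowerSemicontinuous (supGauge H) := by
  intro x c hc
  obtain ⟨r, hr⟩ := lt_iSup_iff.1 hc
  obtain ⟨⟨hr0, hrx⟩, hcr⟩ := lt_iSup_iff.1 hr
  filter_upwards [((hC.2.1 r⁻¹).isOpen_preimage H hH).mem_nhds hrx] with x' hx'
  exact hcr.trans_le (le_supGauge hr0 hx')

theorem SeparatelyContinuousCone.one_lt_supGauge [TopologicalSpace C]
    (hC : SeparatelyContinuousCone C) (hH : IsOpen H) {x : C} (hx : x ∈ H) :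
    1 < supGauge H x := by
  obtain ⟨t, ht0, ht1, htx⟩ := hC.exists_lt_one_smul_mem hH hx
  calc (1 : ℝ≥0∞) < (t⁻¹ : ℝ≥0) := by exact_mod_cast (one_lt_inv₀ ht0).2 ht1
    _ ≤ supGauge H x := le_supGauge (inv_pos.2 ht0) (by rwa [inv_inv])

section Absorbing

variable (hadd : ∀ h ∈ H, ∀ w, h + w ∈ H)
include hadd

theorem supGauge_le_supGauge_add_left (x y : C) : supGauge H y ≤ supGauge H (x + y) :=
  supGauge_le fun _ hr hy => le_supGauge hr (by rw [smul_add, add_comm]; exact hadd _ hy _)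

theorem add_supGauge_le (hconv : IsConvexSet H) (x y : C) :
    supGauge H x + supGauge H y ≤ supGauge H (x + y) := by
  have supGauge_eq_zero : ∀ {z : C}, (¬∃ r : ℝ≥0, 0 < r ∧ r⁻¹ • z ∈ H) → supGauge H z = 0 :=
    fun hz => nonpos_iff_eq_zero.1 <| supGauge_le fun r hr hrz => (hz ⟨r, hr, hrz⟩).elim
  by_cases hx : ∃ r : ℝ≥0, 0 < r ∧ r⁻¹ • x ∈ H
  · by_cases hy : ∃ s : ℝ≥0, 0 < s ∧ s⁻¹ • y ∈ H
    · refine ENNReal.biSup_add_biSup_le' hx hy fun r ⟨hr, hrx⟩ s ⟨hs, hsy⟩ => ?_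
      exact_mod_cast le_supGauge (add_pos hr hs) (hconv.inv_smul_add_mem hr hs hrx hsy)
    · rw [supGauge_eq_zero hy, add_zero, add_comm x]
      exact supGauge_le_supGauge_add_left hadd y x
  · rw [supGauge_eq_zero hx, zero_add]
    exact supGauge_le_supGauge_add_left hadd x y

theorem supGauge_le_one_of_notMem {x : C} (hx : x ∉ H) : supGauge H x ≤ 1 := by
  refine supGauge_le fun r _ hrx => le_of_not_gt fun hr1 => hx ?_
  have hr1 : r⁻¹ ≤ 1 := inv_le_one_of_one_le₀ (by exact_mod_cast hr1.le)
  simpa only [← add_smul, add_tsub_cancel_of_le hr1, one_smul] using hadd _ hrx ((1 - r⁻¹) • x)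

theorem isLinearFunctional_supGauge (hH : IsHalfSpace H) (h0 : (0 : C) ∉ H) :
    IsLinearFunctional (supGauge H) := by
  intro r s x y
  rw [le_antisymm (supGauge_add_le hH.2 _ _) (add_supGauge_le hadd hH.1 _ _),
    supGauge_smul h0, supGauge_smul h0]

end Absorbing

end SupGauge

theorem SeparatelyContinuousCone.exists_isOpen_isHalfSpace {C : Type*} [AddCommMonoid C]
    [Module ℝ≥0 C] [TopologicalSpace C] (hC : SeparatelyContinuousCone C) {V : Set C}
    (hV : IsOpen V) (hVconv : IsConvexSet V) {a : C} (ha : a ∉ V) :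
    ∃ H, V ⊆ H ∧ IsOpen H ∧ IsHalfSpace H ∧ a ∉ H := by
  obtain ⟨H, hVH, hH⟩ := exists_maximal_isOpen_isConvexSet_notMem hV hVconv ha
  exact ⟨H, hVH, hH.1.1, ⟨hH.1.2.1, hC.isConvexSet_compl_of_maximal hH⟩, hH.1.2.2⟩

theorem SeparatelyContinuousCone.exists_separating_of_isOpen {C : Type*} [AddCommMonoid C]
    [Module ℝ≥0 C] [TopologicalSpace C] (hC : SeparatelyContinuousCone C)
    (hlc : LocallyConvexCone C) {U : Set C} (hU : IsOpen U) {a b : C} (ha : a ∉ U) (hb : b ∈ U) :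
    ∃ Λ : C → ℝ≥0∞, LowerSemicontinuous Λ ∧ IsLinearFunctional Λ ∧ Λ a < Λ b := by
  obtain ⟨V, hV, hVconv, hbV, hVU⟩ := hlc b U hU hb
  obtain ⟨H, hVH, hHopen, hhalf, haH⟩ :=
    hC.exists_isOpen_isHalfSpace hV hVconv fun haV => ha (hVU haV)
  have hadd : ∀ h ∈ H, ∀ w, h + w ∈ H := fun _ hh w => hC.add_mem_of_isOpen hHopen hh w
  have h0 : (0 : C) ∉ H := fun h0 => haH (by simpa using hadd 0 h0 a)
  exact ⟨supGauge H, hC.lowerSemicontinuous_supGauge hHopen,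
    isLinearFunctional_supGauge hadd hhalf h0,
    (supGauge_le_one_of_notMem hadd haH).trans_lt (hC.one_lt_supGauge hHopen (hVH hbV))⟩

/-- Every locally convex semitopological cone is convex-T0: any two distinct points are
separated by a lower semicontinuous linear functional `Λ : C → [0,∞]`. -/
theorem locallyConvex_convexT0
    (C : Type*) [AddCommMonoid C] [Module ℝ≥0 C] [TopologicalSpace C] [T0Space C]
    (hsep : SeparatelyContinuousCone C) (hlc : LocallyConvexCone C) :
    ConvexT0 C := by
  intro a b hab
  obtain ⟨U, hU, ⟨haU, hbU⟩ | ⟨hbU, haU⟩⟩ := exists_isOpen_xor_mem hab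
  · obtain ⟨Λ, hΛ, hlin, hlt⟩ := hsep.exists_separating_of_isOpen hlc hU hbU haU
    exact ⟨Λ, hΛ, hlin, hlt.ne'⟩
  · obtain ⟨Λ, hΛ, hlin, hlt⟩ := hsep.exists_separating_of_isOpen hlc hU haU hbU
    exact ⟨Λ, hΛ, hlin, hlt.ne⟩
end

section
/- Let L be a complete lattice with its Scott topology and the cone structure where x+y = x∨y and r·x = x if r>0, ⊥ if r=0. Then the lower semicontinuous linear maps Λ : L → [0,∞] are exactly the maps of the form ∞·χ_{L∖↓x₀} for points x₀ ∈ L (i.e., Λ(x)=0 if x ≤ x₀ and Λ(x)=∞ otherwise). -/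
open Set ENNReal NNReal TopologicalSpace MeasureTheory
open scoped Classical

/-- Linearity of a functional `Λ : L → [0,∞]` with respect to the join-cone structure on
a complete lattice `L` (`x + y = x ⊔ y`, `r · x = x` if `r > 0` and `⊥` if `r = 0`):
`Λ(r·x + s·y) = r·Λ(x) + s·Λ(y)`. -/
def JoinConeLinear {L : Type*} [CompleteLattice L] (Λ : L → ℝ≥0∞) : Prop :=
  ∀ (r s : ℝ≥0) (x y : L),
    Λ ((if r = 0 then ⊥ else x) ⊔ (if s = 0 then ⊥ else y)) =
      (r : ℝ≥0∞) * Λ x + (s : ℝ≥0∞) * Λ y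

/-!
Additivity `Λ (x ⊔ y) = Λ x + Λ y` with `x = y` gives `Λ x = 2 Λ x`, so `Λ` only takes the
values `0` and `∞`, and it is monotone. Hence its zero set `Z` is a directed lower set
containing `⊥`; lower semicontinuity for the Scott topology means `Λ` cannot jump up at
directed suprema, so `x₀ = sSup Z` lies in `Z`, and `Λ` is `∞ · χ_{L ∖ ↓x₀}`. Conversely such a
map is lower semicontinuous because `↓x₀` is Scott closed, and linear by a case check.
-/

theorem LowerSemicontinuous.map_sSup_le_of_directedOn {L β : Type*} [CompleteLattice L]
    [TopologicalSpace L] [Topology.IsScott L univ] [CompleteLinearOrder β] {f : L → β}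
    (hf : LowerSemicontinuous f) {D : Set L} (hne : D.Nonempty) (hD : DirectedOn (· ≤ ·) D) :
    f (sSup D) ≤ ⨆ d ∈ D, f d := by
  by_contra! hlt
  have hinacc : DirSupInaccOn univ (f ⁻¹' Ioi (⨆ d ∈ D, f d)) :=
    (Topology.IsScott.isOpen_iff_isUpperSet_and_dirSupInaccOn.mp (hf.isOpen_preimage _)).2
  obtain ⟨d, hdD, hd⟩ := hinacc (mem_univ D) hne hD (isLUB_sSup D) hlt
  exact (le_iSup₂ (f := fun d _ => f d) d hdD).not_gt hd

namespace JoinConeLinear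

variable {L : Type*} [CompleteLattice L] {Λ : L → ℝ≥0∞}

theorem map_sup (hΛ : JoinConeLinear Λ) (x y : L) : Λ (x ⊔ y) = Λ x + Λ y := by
  simpa using hΛ 1 1 x y

theorem map_bot (hΛ : JoinConeLinear Λ) : Λ ⊥ = 0 := by
  simpa using hΛ 0 0 ⊥ ⊥

theorem monotone (hΛ : JoinConeLinear Λ) : Monotone Λ := fun x y hxy => by
  calc Λ x ≤ Λ x + Λ y := le_self_add
    _ = Λ y := by rw [← hΛ.map_sup, sup_eq_right.mpr hxy]

theorem eq_zero_or_eq_top (hΛ : JoinConeLinear Λ) (x : L) : Λ x = 0 ∨ Λ x = ∞ := by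
  refine or_iff_not_imp_right.mpr fun hx => (ENNReal.add_right_inj hx).mp ?_
  rw [add_zero, ← hΛ.map_sup, sup_idem]

theorem directedOn_zeroSet (hΛ : JoinConeLinear Λ) : DirectedOn (· ≤ ·) {x | Λ x = 0} :=
  fun x hx y hy => ⟨x ⊔ y, by simp_all [hΛ.map_sup], le_sup_left, le_sup_right⟩

theorem map_sSup_zeroSet [TopologicalSpace L] [Topology.IsScott L univ]
    (hΛ : JoinConeLinear Λ) (hls : LowerSemicontinuous Λ) : Λ (sSup {x | Λ x = 0}) = 0 :=
  nonpos_iff_eq_zero.mp <|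
    (hls.map_sSup_le_of_directedOn ⟨⊥, hΛ.map_bot⟩ hΛ.directedOn_zeroSet).trans (iSup₂_le fun _ hx => hx.le)

theorem eq_ite_le_sSup_zeroSet [TopologicalSpace L] [Topology.IsScott L univ]
    (hΛ : JoinConeLinear Λ) (hls : LowerSemicontinuous Λ) (x : L) :
    Λ x = if x ≤ sSup {x | Λ x = 0} then 0 else ∞ := by
  split_ifs with hx
  · exact nonpos_iff_eq_zero.mp (hΛ.map_sSup_zeroSet hls ▸ hΛ.monotone hx)
  · exact (hΛ.eq_zero_or_eq_top x).resolve_left fun h0 => hx (le_sSup h0)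

end JoinConeLinear

theorem lowerSemicontinuous_ite_le_zero_top {L : Type*} [TopologicalSpace L] [Preorder L]
    [ClosedIicTopology L] (x₀ : L) :
    LowerSemicontinuous fun x : L => if x ≤ x₀ then (0 : ℝ≥0∞) else ∞ := by
  convert (isClosed_Iic (a := x₀)).isOpen_compl.lowerSemicontinuous_indicator
    (zero_le : (0 : ℝ≥0∞) ≤ ∞) using 1
  ext x
  by_cases hx : x ≤ x₀ <;> simp [hx]

theorem joinConeLinear_ite_le_zero_top {L : Type*} [CompleteLattice L] (x₀ : L) :
    JoinConeLinear fun x : L => if x ≤ x₀ then (0 : ℝ≥0∞) else ∞ := by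
  intro r s x y
  by_cases hr : r = 0 <;> by_cases hs : s = 0 <;> by_cases hx : x ≤ x₀ <;>
    by_cases hy : y ≤ x₀ <;> simp [hr, hs, hx, hy, ENNReal.mul_top]

/-- Let `L` be a complete lattice with its Scott topology and the join-cone structure.
The lower semicontinuous linear maps `Λ : L → [0,∞]` are exactly the maps
`∞·χ_{L∖↓x₀}` for `x₀ ∈ L`, i.e. `Λ(x) = 0` if `x ≤ x₀` and `Λ(x) = ∞` otherwise. -/
theorem joinCone_linear_functionals
    (L : Type*) [CompleteLattice L] [TopologicalSpace L] [Topology.IsScott L Set.univ]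
    (Λ : L → ℝ≥0∞) :
    (LowerSemicontinuous Λ ∧ JoinConeLinear Λ) ↔
      ∃ x₀ : L, ∀ x : L, Λ x = if x ≤ x₀ then 0 else ∞ := by
  constructor
  · rintro ⟨hls, hΛ⟩
    exact ⟨_, hΛ.eq_ite_le_sSup_zeroSet hls⟩
  · rintro ⟨x₀, hx₀⟩
    obtain rfl : Λ = fun x => if x ≤ x₀ then 0 else ∞ := funext hx₀
    exact ⟨lowerSemicontinuous_ite_le_zero_top x₀, joinConeLinear_ite_le_zero_top x₀⟩
end

section
/- Let L be a complete lattice with its Scott topology and the join-cone structure. If the binary join ∨ : L × L → L is jointly continuous (with respect to the Scott topologies), then the map β : V_w L → L sending each continuous valuation ν to ⋁ supp ν is continuous with respect to the weak topology on V_w L and the Scott topology on L. -/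
open Set ENNReal NNReal TopologicalSpace MeasureTheory
open scoped Classical

/-- The weak topology on the set of continuous valuations on `X`, generated by the
subbasic sets `[U > r] = {μ | μ(U) > r}`, for `U` open in `X` and `r` a nonnegative real. -/
def weakTopology (X : Type*) [TopologicalSpace X] : TopologicalSpace (ContValuation X) :=
  .generateFrom
    {A | ∃ (U : Opens X) (r : ℝ≥0), A = {μ : ContValuation X | (r : ℝ≥0∞) < μ.toFun U}}

/-- `V_w X`: the space of continuous valuations carries the weak topology. -/
instance (X : Type*) [TopologicalSpace X] : TopologicalSpace (ContValuation X) :=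
  weakTopology X

/-- The support of a continuous valuation `ν`: the complement of the largest open set of
`ν`-measure zero. -/
def ContValuation.supp {X : Type*} [TopologicalSpace X] (ν : ContValuation X) : Set X :=
  (↑(sSup {U : Opens X | ν.toFun U = 0}) : Set X)ᶜ

/-!
A Scott open set `W` containing `⋁ supp ν` already contains a finite join `x₁ ∨ ⋯ ∨ xₙ` of
points of `supp ν`, since `⋁ supp ν` is the directed join of such finite joins. Continuity of
`∨` gives open sets `Uᵢ ∋ xᵢ` such that `y₁ ∨ ⋯ ∨ yₙ ∈ W` whenever `yᵢ ∈ Uᵢ`. Each `Uᵢ` meets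
`supp ν`, i.e. `ν(Uᵢ) > 0`, and `⋂ᵢ [Uᵢ > 0]` is a weak neighbourhood of `ν`. For `μ` in it we
may pick `yᵢ ∈ Uᵢ ∩ supp μ`; then `y₁ ∨ ⋯ ∨ yₙ ≤ ⋁ supp μ`, and `W` is an upper set.
-/

open Topology

theorem DirSupInacc.exists_finite_sSup_mem {α : Type*} [CompleteLattice α] {W s : Set α}
    (hW : DirSupInacc W) (hs : sSup s ∈ W) : ∃ t ⊆ s, t.Finite ∧ sSup t ∈ W := by
  set d := sSup '' {t | t ⊆ s ∧ t.Finite}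
  have hd_nonempty : d.Nonempty := ⟨_, mem_image_of_mem _ ⟨empty_subset s, finite_empty⟩⟩
  have hd_directed : DirectedOn (· ≤ ·) d := by
    rintro _ ⟨t₁, ⟨ht₁s, ht₁⟩, rfl⟩ _ ⟨t₂, ⟨ht₂s, ht₂⟩, rfl⟩
    exact ⟨_, mem_image_of_mem _ ⟨union_subset ht₁s ht₂s, ht₁.union ht₂⟩,
      sSup_le_sSup subset_union_left, sSup_le_sSup subset_union_right⟩
  have hd_lub : IsLUB d (sSup s) := by
    refine ⟨?_, fun b hb => sSup_le fun a ha => ?_⟩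
    · rintro _ ⟨t, ⟨hts, -⟩, rfl⟩
      exact sSup_le_sSup hts
    · simpa using hb (mem_image_of_mem _ ⟨singleton_subset_iff.2 ha, finite_singleton a⟩)
  obtain ⟨_, ⟨t, ⟨hts, ht⟩, rfl⟩, htW⟩ := hW hd_nonempty hd_directed hd_lub hs
  exact ⟨t, hts, ht, htW⟩

theorem continuous_iSup_of_finite {ι L : Type*} [Finite ι] [CompleteLattice L]
    [TopologicalSpace L] [ContinuousSup L] : Continuous fun g : ι → L => ⨆ i, g i := by
  cases nonempty_fintype ι
  simp_rw [← Finset.sup_univ_eq_iSup]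
  exact Continuous.finset_sup_apply fun i _ => continuous_apply i

theorem continuous_sSup_of_eventually_inter_nonempty {X L : Type*} [TopologicalSpace X]
    [CompleteLattice L] [TopologicalSpace L] [Topology.IsScott L univ] [ContinuousSup L]
    {S : X → Set L}
    (hS : ∀ x (U : Set L), IsOpen U → (U ∩ S x).Nonempty → ∀ᶠ y in 𝓝 x, (U ∩ S y).Nonempty) :
    Continuous fun x => sSup (S x) := by
  refine continuous_def.2 fun W hW => isOpen_iff_mem_nhds.2 fun x hx => ?_
  obtain ⟨hW_upper, hW_inacc⟩ :=
    (Topology.IsScott.isOpen_iff_isUpperSet_and_dirSupInaccOn (D := univ)).1 hW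
  obtain ⟨t, hts, ht, htW⟩ := (dirSupInaccOn_univ.1 hW_inacc).exists_finite_sSup_mem hx
  have : Finite t := ht.to_subtype
  rw [sSup_eq_iSup'] at htW
  obtain ⟨u, hu, hu_sub⟩ :=
    isOpen_pi_iff'.1 (hW.preimage continuous_iSup_of_finite) ((↑) : t → L) htW
  have hmeet : ∀ᶠ y in 𝓝 x, ∀ a : t, (u a ∩ S y).Nonempty :=
    Filter.eventually_all.2 fun a => hS x _ (hu a).1 ⟨a, (hu a).2, hts a.2⟩
  filter_upwards [hmeet] with y hy
  choose g hgu hgS using hy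
  exact hW_upper (iSup_le fun a => le_sSup (hgS a)) (hu_sub fun a _ => hgu a)

namespace ContValuation

variable {X : Type*} [TopologicalSpace X] (ν : ContValuation X)

theorem toFun_sSup_null : ν.toFun (sSup {U : Opens X | ν.toFun U = 0}) = 0 := by
  have hdir : DirectedOn (· ≤ ·) {U : Opens X | ν.toFun U = 0} := by
    intro U hU V hV
    refine ⟨U ⊔ V, ?_, le_sup_left, le_sup_right⟩
    have hsum : ν.toFun (U ⊔ V) + ν.toFun (U ⊓ V) = 0 := by
      rw [← ν.modular' U V, hU, hV, add_zero]
    exact (add_eq_zero.mp hsum).1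
  rw [ν.scott' _ ⟨⊥, ν.strict'⟩ hdir]
  exact ENNReal.iSup_eq_zero.2 fun U => ENNReal.iSup_eq_zero.2 id

theorem inter_supp_nonempty_iff (U : Opens X) :
    ((U : Set X) ∩ ν.supp).Nonempty ↔ ν.toFun U ≠ 0 := by
  rw [ContValuation.supp, inter_compl_nonempty_iff, SetLike.coe_subset_coe, not_iff_not]
  exact ⟨fun hU => le_antisymm ((ν.mono' _ _ hU).trans ν.toFun_sSup_null.le) zero_le,
    fun hU => le_sSup hU⟩

theorem eventually_inter_supp_nonempty {U : Opens X} (h : ((U : Set X) ∩ ν.supp).Nonempty) :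
    ∀ᶠ μ in 𝓝 ν, ((U : Set X) ∩ μ.supp).Nonempty := by
  have hopen : IsOpen {μ : ContValuation X | ((0 : ℝ≥0) : ℝ≥0∞) < μ.toFun U} :=
    isOpen_generateFrom_of_mem ⟨U, 0, rfl⟩
  have hν : ((0 : ℝ≥0) : ℝ≥0∞) < ν.toFun U := by
    simpa [pos_iff_ne_zero] using (ν.inter_supp_nonempty_iff U).1 h
  filter_upwards [hopen.mem_nhds hν] with μ hμ
  exact (μ.inter_supp_nonempty_iff U).2 (by simpa [pos_iff_ne_zero] using hμ)

end ContValuation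

/-- Let `L` be a complete lattice with its Scott topology. If the binary join
`∨ : L × L → L` is jointly continuous, then the map `β : V_w L → L` sending each
continuous valuation `ν` to `⋁ supp ν` is continuous, from the weak topology on `V_w L`
to the Scott topology on `L`. -/
theorem joinCone_barycentre_map_continuous
    (L : Type*) [CompleteLattice L] [TopologicalSpace L] [Topology.IsScott L Set.univ]
    (hjoin : Continuous fun p : L × L => p.1 ⊔ p.2) :
    Continuous (fun ν : ContValuation L => sSup ν.supp) := by
  have : ContinuousSup L := ⟨hjoin⟩
  exact continuous_sSup_of_eventually_inter_nonempty fun ν U hU h =>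
    ν.eventually_inter_supp_nonempty (U := ⟨U, hU⟩) h
end
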